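/- arXiv:2605.06295 — 2 statements merged into one kernel-verified Lean document; each statement's English description precedes it below -/
import Mathlib

section
/- Scaled Shapley-Taylor interactions hierarchically decompose the Shapley value: for any game v and player i, m_{{i}}(v) + ∑_{j≠i} (1/2)·ψ^{STII}_{{i,j}}(v) equals the Shapley value φ_i^{SV}(v). -/
open Finset

/-- Möbius transform of a cooperative game. -/
noncomputable def mobius {d : ℕ} (v : Finset (Fin d) → ℝ) (S : Finset (Fin d)) : ℝ :=
  ∑ T ∈ S.powerset, (-1 : ℝ) ^ (S.card - T.card) * v T

/-- Order-2 Shapley-Taylor interaction index for the pair `{i,j}`: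
`ψ^{STII}_{{i,j}} = ∑_{S : i,j ∈ S} m_S(v)/C(|S|,2)`. -/
noncomputable def stiiPair {d : ℕ} (v : Finset (Fin d) → ℝ) (i j : Fin d) : ℝ :=
  ∑ S ∈ Finset.univ.powerset.filter (fun S => i ∈ S ∧ j ∈ S),
    mobius v S / ((S.card.choose 2 : ℕ) : ℝ)

/-- Shapley value of `i` in Möbius representation: `∑_{S : i ∈ S} m_S(v)/|S|`. -/
noncomputable def phiSV {d : ℕ} (v : Finset (Fin d) → ℝ) (i : Fin d) : ℝ :=
  ∑ S ∈ Finset.univ.powerset.filter (fun S => i ∈ S), mobius v S / (S.card : ℝ)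

/-!
Exchanging the order of summation, `∑_{j ≠ i} ψ_{ij}` counts every coalition `S ∋ i` once for
each of its `|S| - 1` other members, so it equals `∑_{S ∋ i} (|S| - 1) m_S / C(|S|, 2)`.
Since `(|S| - 1) / C(|S|, 2) = 2 / |S|` for `|S| ≥ 2`, half of this is the Shapley value with
the singleton term `m_{i}` removed.
-/

theorem Finset.sum_erase_sum_filter_mem {α M : Type*} [Fintype α] [DecidableEq α]
    [AddCommMonoid M] (F : Finset (Finset α)) (i : α) (f : Finset α → M) :
    ∑ j ∈ univ.erase i, ∑ S ∈ F.filter (fun S => j ∈ S), f S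
      = ∑ S ∈ F, (S.erase i).card • f S := by
  simp_rw [sum_filter]
  rw [sum_comm]
  refine sum_congr rfl fun S _ => ?_
  rw [← sum_filter, ← sum_const]
  congr 1
  ext j
  simp [and_comm]

theorem Nat.cast_inv_eq_half_mul_sub_one_div_choose_two {n : ℕ} (hn : 1 < n) :
    (n : ℝ)⁻¹ = 2⁻¹ * (((n - 1 : ℕ) : ℝ) / (n.choose 2 : ℕ)) := by
  have hn' : (1 : ℝ) < n := by exact_mod_cast hn
  rw [Nat.cast_choose_two, Nat.cast_sub hn.le, Nat.cast_one]
  field_simp [(by linarith : (n : ℝ) - 1 ≠ 0)]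

theorem sum_stiiPair_erase {d : ℕ} (v : Finset (Fin d) → ℝ) (i : Fin d) :
    ∑ j ∈ univ.erase i, stiiPair v i j
      = ∑ S ∈ univ.powerset.filter (fun S => i ∈ S),
          ((S.card - 1 : ℕ) : ℝ) * (mobius v S / (S.card.choose 2 : ℕ)) := by
  simp_rw [stiiPair, ← filter_filter, sum_erase_sum_filter_mem, nsmul_eq_mul]
  refine sum_congr rfl fun S hS => ?_
  rw [card_erase_of_mem (mem_filter.mp hS).2]

theorem div_card_eq_ite_singleton_add {α : Type*} [DecidableEq α] {S : Finset α} {i : α} (hi : i ∈ S) (x : ℝ) :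
    x / S.card = (if S = {i} then x else 0)
      + 2⁻¹ * (((S.card - 1 : ℕ) : ℝ) * (x / (S.card.choose 2 : ℕ))) := by
  by_cases hS : S = {i}
  · subst hS
    simp
  · have hcard : 1 < S.card := by
      rw [one_lt_card_iff_nontrivial]
      exact (nontrivial_iff_ne_singleton hi).mpr hS
    rw [if_neg hS, zero_add, div_eq_mul_inv, Nat.cast_inv_eq_half_mul_sub_one_div_choose_two hcard]
    ring

/-- Scaled Shapley-Taylor interactions hierarchically decompose the Shapley
value: `φ_i^{SV} = m_{{i}} + (1/2) ∑_{j ≠ i} ψ^{STII}_{{i,j}}`. -/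
theorem stii_hierarchical_decomposition {d : ℕ} (v : Finset (Fin d) → ℝ) (i : Fin d) :
    phiSV v i = mobius v {i} + (1 / 2) * ∑ j ∈ Finset.univ.erase i, stiiPair v i j := by
  have hsingleton : ({i} : Finset (Fin d)) ∈ univ.powerset.filter (fun S => i ∈ S) := by simp
  rw [phiSV, sum_stiiPair_erase, one_div, mul_sum]
  rw [sum_congr rfl fun S hS => div_card_eq_ite_singleton_add (mem_filter.mp hS).2 (mobius v S)]
  rw [sum_add_distrib, sum_ite_eq' _ _ (fun S => mobius v S), if_pos hsingleton]
end

section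
/- The Faithful Shapley Interaction Index of order 2, scaled directionally, hierarchically decomposes the Shapley value: ψ^{FSII}_{{i}} + ∑_{j≠i} (1/2)ψ^{FSII}_{{i,j}} = φ_i^{SV}. -/
open Finset

/-- Order-2 Faithful Shapley Interaction Index, singleton term. -/
noncomputable def fsiiSingle {d : ℕ} (v : Finset (Fin d) → ℝ) (i : Fin d) : ℝ :=
  mobius v {i} -
    ∑ T ∈ Finset.univ.powerset.filter (fun T => i ∈ T ∧ 2 < T.card),
      (2 * ((T.card : ℝ) - 2) / ((T.card : ℝ) * ((T.card : ℝ) + 1))) * mobius v T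

/-- Order-2 Faithful Shapley Interaction Index, pair term (for `i ≠ j`). -/
noncomputable def fsiiPair {d : ℕ} (v : Finset (Fin d) → ℝ) (i j : Fin d) : ℝ :=
  mobius v {i, j} +
    ∑ T ∈ Finset.univ.powerset.filter (fun T => i ∈ T ∧ j ∈ T ∧ 2 < T.card),
      (6 / ((T.card : ℝ) * ((T.card : ℝ) + 1))) * mobius v T

/-!
Both sides are linear combinations of the Möbius coefficients `m_T` with `i ∈ T`, so it suffices
to compare weights. For `|T| = 1` and `|T| = 2` both weights are `1` and `1/2`. A coalition `T`
with `t = |T| > 2` occurs in the pair index `ψ_{i,j}` for each of the `t - 1` players `j ∈ T \ {i}`,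
so its total weight on the left is `-2(t-2)/(t(t+1)) + (t-1)/2 · 6/(t(t+1)) = 1/t`, its Shapley
weight.
-/

lemma pred_mul_six_div_half_sub_eq_inv (t : ℝ) (ht : t ≠ 0) (ht' : t + 1 ≠ 0) :
    (t - 1) * (6 / (t * (t + 1))) / 2 - 2 * (t - 2) / (t * (t + 1)) = 1 / t := by
  field_simp
  ring

namespace Finset

variable {α : Type*} [Fintype α] [DecidableEq α]

lemma filter_mem_card_eq_one (i : α) :
    univ.powerset.filter (fun T => i ∈ T ∧ #T = 1) = {{i}} := by
  ext T
  simp only [mem_filter, mem_powerset, subset_univ, true_and, mem_singleton, card_eq_one]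
  constructor
  · rintro ⟨hi, a, rfl⟩
    rw [mem_singleton.1 hi]
  · rintro rfl
    exact ⟨mem_singleton_self i, i, rfl⟩

lemma filter_mem_mem_card_eq_two {i j : α} (hij : i ≠ j) :
    univ.powerset.filter (fun T => i ∈ T ∧ j ∈ T ∧ #T = 2) = {{i, j}} := by
  ext T
  simp only [mem_filter, mem_powerset, subset_univ, true_and, mem_singleton]
  constructor
  · rintro ⟨hi, hj, hT⟩
    exact (eq_of_subset_of_card_le (insert_subset hi (singleton_subset_iff.2 hj))
      (by rw [hT, card_pair hij])).symm
  · rintro rfl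
    simp [card_pair hij]

lemma sum_erase_sum_filter_mem_mem {M : Type*} [AddCommMonoid M] (i : α)
    (p : Finset α → Prop) [DecidablePred p] (f : Finset α → M) :
    ∑ j ∈ univ.erase i, ∑ T ∈ univ.powerset.filter (fun T => i ∈ T ∧ j ∈ T ∧ p T), f T =
      ∑ T ∈ univ.powerset.filter (fun T => i ∈ T ∧ p T), (#T - 1) • f T := by
  rw [sum_comm' (t' := univ.powerset.filter (fun T => i ∈ T ∧ p T)) (s' := fun T => T.erase i)]
  · refine sum_congr rfl fun T hT => ?_
    rw [sum_const, card_erase_of_mem (mem_filter.1 hT).2.1]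
  · intro j T
    simp only [mem_erase, mem_univ, mem_filter, mem_powerset, subset_univ, true_and]
    tauto

lemma sum_filter_mem_eq_add_add {M : Type*} [AddCommMonoid M] (i : α) (f : Finset α → M) :
    ∑ T ∈ univ.powerset.filter (fun T => i ∈ T), f T =
      f {i} + ∑ T ∈ univ.powerset.filter (fun T => i ∈ T ∧ #T = 2), f T +
        ∑ T ∈ univ.powerset.filter (fun T => i ∈ T ∧ 2 < #T), f T := by
  rw [← sum_singleton f {i}, ← filter_mem_card_eq_one i]
  simp only [sum_filter, ← sum_add_distrib]
  refine sum_congr rfl fun T _ => ?_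
  by_cases hi : i ∈ T
  · obtain h | h | h : #T = 1 ∨ #T = 2 ∨ 2 < #T := by
      have := card_pos.2 ⟨i, hi⟩
      omega
    · simp [hi, h]
    · simp [hi, h]
    · simp [hi, h, h.ne', (one_lt_two.trans h).ne']
  · simp [hi]

lemma sum_erase_pair_eq_sum_filter_card_eq_two {M : Type*} [AddCommMonoid M] (i : α)
    (f : Finset α → M) :
    ∑ j ∈ univ.erase i, f {i, j} = ∑ T ∈ univ.powerset.filter (fun T => i ∈ T ∧ #T = 2), f T := by
  calc ∑ j ∈ univ.erase i, f {i, j}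
      = ∑ j ∈ univ.erase i, ∑ T ∈ univ.powerset.filter (fun T => i ∈ T ∧ j ∈ T ∧ #T = 2), f T :=
        sum_congr rfl fun j hj => by
          rw [filter_mem_mem_card_eq_two (ne_of_mem_erase hj).symm, sum_singleton]
    _ = ∑ T ∈ univ.powerset.filter (fun T => i ∈ T ∧ #T = 2), f T := by
        rw [sum_erase_sum_filter_mem_mem]
        exact sum_congr rfl fun T hT => by simp [(mem_filter.1 hT).2.2]

lemma sum_filter_card_eq_two_div_card (i : α) (f : Finset α → ℝ) :
    ∑ T ∈ univ.powerset.filter (fun T => i ∈ T ∧ #T = 2), f T / #T =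
      1 / 2 * ∑ T ∈ univ.powerset.filter (fun T => i ∈ T ∧ #T = 2), f T := by
  rw [mul_sum]
  refine sum_congr rfl fun T hT => ?_
  rw [(mem_filter.1 hT).2.2]
  ring

lemma sum_filter_two_lt_card_div_card (i : α) (f : Finset α → ℝ) :
    ∑ T ∈ univ.powerset.filter (fun T => i ∈ T ∧ 2 < #T), f T / #T =
      1 / 2 * ∑ T ∈ univ.powerset.filter (fun T => i ∈ T ∧ 2 < #T),
          (#T - 1) • (6 / ((#T : ℝ) * (#T + 1)) * f T) -
        ∑ T ∈ univ.powerset.filter (fun T => i ∈ T ∧ 2 < #T),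
          2 * ((#T : ℝ) - 2) / (#T * (#T + 1)) * f T := by
  rw [mul_sum, ← sum_sub_distrib]
  refine sum_congr rfl fun T hT => ?_
  have h2T : 2 < #T := (mem_filter.1 hT).2.2
  rw [nsmul_eq_mul, Nat.cast_pred (by omega)]
  linear_combination (-f T) * pred_mul_six_div_half_sub_eq_inv (#T) (by positivity) (by positivity)

end Finset

lemma sum_erase_fsiiPair {d : ℕ} (v : Finset (Fin d) → ℝ) (i : Fin d) :
    ∑ j ∈ univ.erase i, fsiiPair v i j =
      ∑ T ∈ univ.powerset.filter (fun T => i ∈ T ∧ #T = 2), mobius v T +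
        ∑ T ∈ univ.powerset.filter (fun T => i ∈ T ∧ 2 < #T),
          (#T - 1) • (6 / ((#T : ℝ) * (#T + 1)) * mobius v T) := by
  simp only [fsiiPair, sum_add_distrib, sum_erase_pair_eq_sum_filter_card_eq_two i (mobius v),
    sum_erase_sum_filter_mem_mem]

/-- The directionally scaled order-2 FSII hierarchically decomposes the Shapley
value: `ψ^{FSII}_{{i}} + (1/2) ∑_{j ≠ i} ψ^{FSII}_{{i,j}} = φ_i^{SV}`. -/
theorem fsii_hierarchical_decomposition {d : ℕ} (v : Finset (Fin d) → ℝ) (i : Fin d) :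
    fsiiSingle v i + (1 / 2) * ∑ j ∈ Finset.univ.erase i, fsiiPair v i j =
      phiSV v i := by
  rw [fsiiSingle, phiSV, sum_filter_mem_eq_add_add, sum_erase_fsiiPair,
    sum_filter_card_eq_two_div_card, sum_filter_two_lt_card_div_card, card_singleton]
  ring
end
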